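/- Let G be a topological group, Γ a subgroup of G, and L a normal subgroup of G. Write G⁰ for the identity component of G and L⁰ for the identity component of the topological group L (subspace topology), and set G ×_L G := {(a,b) ∈ G × G : ab⁻¹ ∈ L}, Γ ×_L Γ := {(γ₁,γ₂) ∈ Γ × Γ : γ₁γ₂⁻¹ ∈ L}, and G⁰ ×_{L⁰} G⁰ := {(a,b) ∈ G⁰ × G⁰ : ab⁻¹ ∈ L⁰}. If G = G⁰·Γ (every element of G is a product of an element of G⁰ and an element of Γ) and L·Γ = L⁰·Γ (as subsets of G), then G ×_L G = (G⁰ ×_{L⁰} G⁰)·(Γ ×_L Γ); in particular, the space of left cosets (G ×_L G) ⧸ (Γ ×_L Γ), with the quotient topology, is connected. (Lemma 2.11 of the paper; there G is a nilpotent Lie group, Γ uniform and discrete, L rational and closed, and the hypotheses correspond to connectedness of X = G/Γ and of the sub-nilmanifold π(L).) -/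

import Mathlib

/-- The relatively independent self-product `G ×_L G` of a group `G` over a normal
subgroup `L`, i.e. the subgroup `{(a₁, a₂) ∈ G × G : a₁ * a₂⁻¹ ∈ L}` of `G × G`. -/
def relProd {G : Type*} [Group G] (L : Subgroup G) [hN : L.Normal] : Subgroup (G × G) where
  carrier := {p : G × G | p.1 * p.2⁻¹ ∈ L}
  one_mem' := by simpa using L.one_mem
  mul_mem' := by
    rintro ⟨a₁, a₂⟩ ⟨b₁, b₂⟩ ha hb
    have h : (a₁ * b₁) * (a₂ * b₂)⁻¹ = (a₁ * (b₁ * b₂⁻¹) * a₁⁻¹) * (a₁ * a₂⁻¹) := by group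
    simp only [Set.mem_setOf_eq] at ha hb
    show a₁ * b₁ * (a₂ * b₂)⁻¹ ∈ L
    rw [h]
    exact mul_mem (hN.conj_mem _ hb a₁) ha
  inv_mem' := by
    rintro ⟨a₁, a₂⟩ ha
    simp only [Set.mem_setOf_eq] at ha
    have h : a₁⁻¹ * (a₂⁻¹)⁻¹ = a₁⁻¹ * (a₁ * a₂⁻¹)⁻¹ * (a₁⁻¹)⁻¹ := by group
    show a₁⁻¹ * (a₂⁻¹)⁻¹ ∈ L
    rw [h]
    exact hN.conj_mem _ (L.inv_mem ha) a₁⁻¹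

theorem mem_relProd {G : Type*} [Group G] {L : Subgroup G} [L.Normal] {p : G × G} :
    p ∈ relProd L ↔ p.1 * p.2⁻¹ ∈ L := Iff.rfl

open Pointwise

/-!
Write `b = b₀ γ` with `b₀ ∈ G⁰`, `γ ∈ Γ`. For `(a, b) ∈ G ×_L G` the element `b₀⁻¹ a γ⁻¹` lies
in `L`, hence equals `ℓ γ₀` with `ℓ ∈ L⁰`, `γ₀ ∈ Γ ∩ L`. Then
`(a, b) = (b₀ ℓ b₀⁻¹ · b₀, b₀) · (γ₀ γ, γ)`, and the first factor lies in `G⁰ ×_{L⁰} G⁰` because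
conjugation preserves `L⁰`. So the connected set `G⁰ ×_{L⁰} G⁰`, the image of `L⁰ × G⁰` under
`(ℓ, g) ↦ (ℓ g, g)`, meets every coset of `Γ ×_L Γ`, and the coset space is connected.
-/

open Set

theorem Subgroup.connectedSpace_quotient_subgroupOf {M : Type*} [Group M] [TopologicalSpace M]
    {K H : Subgroup M} {S : Set M} (hS : IsConnected S) (hSK : S ⊆ K)
    (hK : (K : Set M) ⊆ S * H) : ConnectedSpace (K ⧸ H.subgroupOf K) := by
  have : ConnectedSpace S := isConnected_iff_connectedSpace.mp hS
  let f : S → K ⧸ H.subgroupOf K := fun s => QuotientGroup.mk ⟨s, hSK s.2⟩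
  refine Function.Surjective.connectedSpace (f := f) ?_ (by fun_prop)
  rintro ⟨k⟩
  obtain ⟨s, hs, h, hh, hsh⟩ := hK k.2
  refine ⟨⟨s, hs⟩, QuotientGroup.eq.mpr ?_⟩
  rwa [Subgroup.mem_subgroupOf, Subgroup.coe_mul, Subgroup.coe_inv, ← hsh, inv_mul_cancel_left]

section IdentityComponent

variable {G : Type*} [Group G] [TopologicalSpace G] {L : Subgroup G}

variable (L) in
def identityComponentRelProd : Set (G × G) :=
  {p | p.1 ∈ connectedComponent (1 : G) ∧ p.2 ∈ connectedComponent (1 : G) ∧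
    ∃ h : p.1 * p.2⁻¹ ∈ L, (⟨p.1 * p.2⁻¹, h⟩ : L) ∈ connectedComponent (1 : L)}

theorem identityComponentRelProd_subset_relProd [L.Normal] :
    identityComponentRelProd L ⊆ (relProd L : Set (G × G)) :=
  fun _ hp => hp.2.2.1

theorem identityComponentRelProd_mul_subset_relProd [L.Normal] {Γ : Subgroup G} :
    identityComponentRelProd L * ((Γ.prod Γ ⊓ relProd L : Subgroup (G × G)) : Set (G × G)) ⊆
      (relProd L : Set (G × G)) := by
  rintro _ ⟨s, hs, t, ht, rfl⟩
  exact mul_mem (identityComponentRelProd_subset_relProd hs) (Subgroup.mem_inf.mp ht).2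

variable [IsTopologicalGroup G]

theorem MulAut.conjNormal_mem_connectedComponent_one [L.Normal] (g : G)
    {x : L} (hx : x ∈ connectedComponent (1 : L)) :
    MulAut.conjNormal g x ∈ connectedComponent (1 : L) := by
  have hcont : Continuous (MulAut.conjNormal g : L → L) :=
    Continuous.subtype_mk (by fun_prop : Continuous fun y : L => g * (y : G) * g⁻¹) _
  simpa using hcont.mapsTo_connectedComponent 1 hx

theorem mk_mem_identityComponentRelProd {ℓ : L} (hℓ : ℓ ∈ connectedComponent (1 : L)) {g : G}
    (hg : g ∈ connectedComponent (1 : G)) : ((ℓ : G) * g, g) ∈ identityComponentRelProd L :=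
  ⟨mul_mem_connectedComponent_one (continuous_subtype_val.mapsTo_connectedComponent 1 hℓ) hg,
    hg, by simp [hℓ]⟩

theorem identityComponentRelProd_eq_image :
    identityComponentRelProd L = (fun q : L × G => ((q.1 : G) * q.2, q.2)) ''
      (connectedComponent (1 : L) ×ˢ connectedComponent (1 : G)) := by
  refine Subset.antisymm ?_ ?_
  · rintro ⟨a, b⟩ ⟨-, hb, hab, hℓ⟩
    exact ⟨(⟨a * b⁻¹, hab⟩, b), ⟨hℓ, hb⟩, by simp⟩
  · rintro _ ⟨⟨ℓ, g⟩, ⟨hℓ, hg⟩, rfl⟩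
    exact mk_mem_identityComponentRelProd hℓ hg

theorem isConnected_identityComponentRelProd : IsConnected (identityComponentRelProd L) := by
  rw [identityComponentRelProd_eq_image]
  exact (isConnected_connectedComponent.prod isConnected_connectedComponent).image _
    (by fun_prop)

theorem relProd_subset_identityComponentRelProd_mul [L.Normal] {Γ : Subgroup G}
    (hG : univ ⊆ connectedComponent (1 : G) * (Γ : Set G))
    (hL : (L : Set G) ⊆ (Subtype.val '' connectedComponent (1 : L)) * (Γ : Set G)) :
    (relProd L : Set (G × G)) ⊆
      identityComponentRelProd L * ((Γ.prod Γ ⊓ relProd L : Subgroup (G × G)) : Set (G × G)) := by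
  rintro ⟨a, b⟩ (hab : a * b⁻¹ ∈ L)
  obtain ⟨b₀, hb₀, γ, hγ, rfl⟩ := hG (mem_univ b)
  have hm : b₀⁻¹ * a * γ⁻¹ ∈ L := by
    simpa [mul_assoc] using Subgroup.Normal.conj_mem inferInstance _ hab b₀⁻¹
  obtain ⟨_, ⟨ℓ, hℓ, rfl⟩, γ₀, hγ₀, hℓγ₀ : (ℓ : G) * γ₀ = _⟩ := hL hm
  have hγ₀L : γ₀ ∈ L := by
    rw [eq_inv_mul_of_mul_eq hℓγ₀]
    exact mul_mem (inv_mem ℓ.2) hm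
  refine ⟨((MulAut.conjNormal b₀ ℓ : G) * b₀, b₀),
    mk_mem_identityComponentRelProd (MulAut.conjNormal_mem_connectedComponent_one b₀ hℓ) hb₀,
    (γ₀ * γ, γ), ⟨⟨mul_mem hγ₀ hγ, hγ⟩, by simpa [mem_relProd] using hγ₀L⟩, ?_⟩
  have ha : b₀ * ((ℓ : G) * γ₀) * γ = a := by rw [hℓγ₀]; group
  ext
  · simp only [Prod.fst_mul, MulAut.conjNormal_apply, ← ha]
    group
  · rfl

end IdentityComponent

/-- **Lemma 2.11.** Let `G` be a topological group, `Γ` a subgroup, `L` a normal subgroup.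
If `G = G⁰·Γ` and `L·Γ = L⁰·Γ`, then `G ×_L G = (G⁰ ×_{L⁰} G⁰)·(Γ ×_L Γ)`; in particular the
coset space `(G ×_L G) ⧸ (Γ ×_L Γ)` is connected. -/
theorem relProd_quotient_connected {G : Type*} [Group G] [TopologicalSpace G]
    [IsTopologicalGroup G] (Γ : Subgroup G) (L : Subgroup G) [L.Normal]
    (hG : (Set.univ : Set G) = connectedComponent (1 : G) * (Γ : Set G))
    (hL : (L : Set G) * (Γ : Set G) =
      (Subtype.val '' connectedComponent (1 : L)) * (Γ : Set G)) :
    ((relProd L : Subgroup (G × G)) : Set (G × G)) =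
      {p : G × G | p.1 ∈ connectedComponent (1 : G) ∧ p.2 ∈ connectedComponent (1 : G) ∧
        ∃ h : p.1 * p.2⁻¹ ∈ L, (⟨p.1 * p.2⁻¹, h⟩ : L) ∈ connectedComponent (1 : L)} *
      ((Γ.prod Γ ⊓ relProd L : Subgroup (G × G)) : Set (G × G)) ∧
    ConnectedSpace (↥(relProd L) ⧸ ((Γ.prod Γ ⊓ relProd L).subgroupOf (relProd L))) := by
  have hL' : (L : Set G) ⊆ (Subtype.val '' connectedComponent (1 : L)) * (Γ : Set G) :=
    (subset_mul_left _ Γ.one_mem).trans hL.subset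
  have hdecomp : ((relProd L : Subgroup (G × G)) : Set (G × G)) =
      identityComponentRelProd L * ((Γ.prod Γ ⊓ relProd L : Subgroup (G × G)) : Set (G × G)) :=
    (relProd_subset_identityComponentRelProd_mul hG.subset hL').antisymm
      identityComponentRelProd_mul_subset_relProd
  exact ⟨hdecomp, Subgroup.connectedSpace_quotient_subgroupOf
    isConnected_identityComponentRelProd identityComponentRelProd_subset_relProd hdecomp.subset⟩
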